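/- arXiv:2502.00526 — 2 statements merged into one kernel-verified Lean document; each statement's English description precedes it below -/
import Mathlib

section
/- For every prime q with q ≡ 3 (mod 4), the class number of the imaginary quadratic field ℚ(√−q) is odd. -/
/-!
Let `σ` be the nontrivial automorphism of `K = ℚ(√-q)`. Every `σ`-invariant ideal of `𝓞 K` is
principal: it is a product of ideals `P ⊓ σP` with `P` prime, and these are `(p)` when `P` lies over
a split or inert prime `p`, and `(√-q)` when `P` is ramified. The only ramified prime is `q`, since
`q ≡ 3 mod 4` makes `(1 + √-q) / 2` an algebraic integer whose difference with its conjugate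
is `√-q`.

Now let `c⁻¹ = c` and `I ∈ c`. The invariant ideal `I * σI` is principal, so `σI ∈ c⁻¹ = c`, that
is `(x) σI = (y) I`. Together with its conjugate this gives `x σx = y σy` up to a unit, and the
unit is `1` because norms from an imaginary quadratic field are positive rationals. By Hilbert 90
for `x / y`, `I` is equivalent to an invariant ideal, so `c = 1`: the class group has no element
of order `2`.
-/

open NumberField Ideal

theorem Submodule.IsPrincipal.mul {R : Type*} [CommRing R] {I J : Ideal R} (hI : I.IsPrincipal)
    (hJ : J.IsPrincipal) : (I * J).IsPrincipal := by
  obtain ⟨a, rfl⟩ := hI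
  obtain ⟨b, rfl⟩ := hJ
  exact ⟨a * b, span_singleton_mul_span_singleton a b⟩

namespace Ideal

theorem map_map_of_involutive {R : Type*} [CommRing R] {σ : R ≃+* R} (hσ : Function.Involutive σ)
    (I : Ideal R) : (I.map σ).map σ = I := by
  have hsymm : σ.symm = σ := RingEquiv.ext fun x ↦ σ.symm_apply_eq.mpr (hσ x).symm
  conv_lhs => arg 2; rw [← comap_symm, hsymm]
  exact map_comap_eq_self_of_equiv σ I

variable {S : Type*} [CommRing S] [IsDedekindDomain S] [Module.Free ℤ S]

theorem absNorm_map_ringEquiv (σ : S ≃+* S) (I : Ideal S) : absNorm (I.map σ) = absNorm I := by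
  rw [absNorm_apply, absNorm_apply, Submodule.cardQuot_apply, Submodule.cardQuot_apply]
  exact (Nat.card_congr (quotientEquiv I _ σ rfl).toEquiv).symm

theorem sub_apply_mem_of_map_eq_self {P : Ideal S} (hP : (absNorm P).Prime)
    {σ : S ≃+* S} (hσ : P.map σ = P) (x : S) : x - σ x ∈ P := by
  have : Fintype (S ⧸ P) := @Fintype.ofFinite _ ((absNorm_ne_zero_iff P).mp hP.ne_zero)
  have hcard : Fintype.card (S ⧸ P) = absNorm P := by
    rw [absNorm_apply, Submodule.cardQuot_apply, Nat.card_eq_fintype_card]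
  set e := ZMod.ringEquivOfPrime (S ⧸ P) hP hcard
  obtain ⟨a, ha⟩ := ZMod.intCast_surjective (e.symm (Quotient.mk P x))
  have hxa : x - a ∈ P := by
    rw [← Quotient.eq_zero_iff_mem, map_sub, map_intCast, sub_eq_zero,
      ← e.apply_symm_apply (Quotient.mk P x), ← ha, map_intCast]
  have hσxa : σ x - a ∈ P := by
    have := mem_map_of_mem σ hxa
    rwa [hσ, map_sub, map_intCast] at this
  simpa using sub_mem hxa hσxa

variable [Module.Finite ℤ S]

theorem eq_of_dvd_of_absNorm_eq {I J : Ideal S} (hJ : J ≠ ⊥) (hIJ : I ∣ J)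
    (h : absNorm I = absNorm J) : I = J := by
  obtain ⟨C, rfl⟩ := hIJ
  have hI : absNorm I ≠ 0 := (absNorm_eq_zero_iff.not).mpr (left_ne_zero_of_mul hJ)
  rw [map_mul, left_eq_mul₀ hI, absNorm_eq_one_iff] at h
  rw [h, mul_top]

theorem isPrincipal_of_map_eq_self {σ : S ≃+* S} (hσ : Function.Involutive σ)
    (hP : ∀ P : Ideal S, P.IsMaximal → (P ⊓ P.map σ).IsPrincipal)
    {I : Ideal S} (hI : I ≠ ⊥) (hIσ : I.map σ = I) : I.IsPrincipal := by
  induction hn : absNorm I using Nat.strong_induction_on generalizing I with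
  | _ n ih =>
  obtain rfl | hItop := eq_or_ne I ⊤
  · exact top_isPrincipal
  obtain ⟨P, hPmax, hIP⟩ := exists_le_maximal I hItop
  have hDσ : (P ⊓ P.map σ).map σ = P ⊓ P.map σ := by
    rw [← comap_symm, comap_inf, comap_symm, comap_symm, map_map_of_involutive hσ, inf_comm]
  obtain ⟨J, rfl⟩ : P ⊓ P.map σ ∣ I := dvd_iff_le.mpr (le_inf hIP (hIσ ▸ map_mono hIP))
  have hD : P ⊓ P.map σ ≠ ⊥ := left_ne_zero_of_mul hI
  have hJ : J ≠ ⊥ := right_ne_zero_of_mul hI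
  have hJσ : J.map σ = J := by
    refine mul_left_cancel₀ hD ?_
    conv_lhs => rw [← hDσ, ← Ideal.map_mul, hIσ]
  have hJn : absNorm J < n := by
    have hD1 : absNorm (P ⊓ P.map σ) ≠ 1 :=
      (absNorm_eq_one_iff.not).mpr (ne_top_of_le_ne_top hPmax.ne_top inf_le_left)
    have hD0 : absNorm (P ⊓ P.map σ) ≠ 0 := (absNorm_eq_zero_iff.not).mpr hD
    have hJ0 : absNorm J ≠ 0 := (absNorm_eq_zero_iff.not).mpr hJ
    rw [← hn, map_mul]
    exact lt_mul_left (Nat.pos_of_ne_zero hJ0) (by omega)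
  exact (hP P hPmax).mul (ih _ hJn hJ hJσ rfl)

end Ideal

section ClassGroup

open scoped nonZeroDivisors

variable {R : Type*} [CommRing R] [IsDedekindDomain R] {σ : R ≃+* R}

theorem associated_mul_apply_of_span_mul_map_eq (hσ : Function.Involutive σ) {I : Ideal R}
    (hI : I ≠ ⊥) {x y : R} (h : span {x} * I.map σ = span {y} * I) :
    Associated (x * σ x) (y * σ y) := by
  have hσh : span {σ x} * I = span {σ y} * I.map σ := by
    simpa [Ideal.map_mul, map_span, map_map_of_involutive hσ] using congrArg (map σ) h
  have hII : I * I.map σ ≠ ⊥ :=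
    mul_ne_zero hI ((map_eq_bot_iff_of_injective σ.injective).not.mpr hI)
  rw [← span_singleton_eq_span_singleton]
  refine mul_right_cancel₀ hII ?_
  calc span {x * σ x} * (I * I.map σ) = (span {x} * I.map σ) * (span {σ x} * I) := by
        rw [← span_singleton_mul_span_singleton]; ring
    _ = (span {y} * I) * (span {σ y} * I.map σ) := by rw [h, hσh]
    _ = span {y * σ y} * (I * I.map σ) := by
        rw [← span_singleton_mul_span_singleton]; ring

/-- Hilbert 90: the norm-one element `x / y` equals `σ w / w` for `w = σ x * (x + y)`, and
`span {σ w} * I` is then `σ`-invariant (when `x + y = 0`, already `I` is). -/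
theorem exists_map_span_singleton_mul_eq (hσ : Function.Involutive σ) {I : Ideal R} {x y : R}
    (hx : x ≠ 0) (hxy : x * σ x = y * σ y) (h : span {x} * I.map σ = span {y} * I) :
    ∃ g ≠ 0, (span {g} * I).map σ = span {g} * I := by
  by_cases hxy0 : x + y = 0
  · refine ⟨1, one_ne_zero, ?_⟩
    rw [eq_neg_of_add_eq_zero_right hxy0, span_singleton_neg] at h
    simpa using mul_left_cancel₀ ((span_singleton_eq_bot.not).mpr hx) h
  · refine ⟨σ x * (x + y), mul_ne_zero (by simpa using hx) hxy0, ?_⟩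
    calc (span {σ x * (x + y)} * I).map σ = span {σ x + σ y} * (span {x} * I.map σ) := by
          rw [Ideal.map_mul, map_span, Set.image_singleton, ← mul_assoc,
            span_singleton_mul_span_singleton, map_mul, map_add, hσ x, mul_comm x]
      _ = span {σ x * (x + y)} * I := by
          rw [h, ← mul_assoc, span_singleton_mul_span_singleton]
          congr 3
          linear_combination -hxy

theorem ClassGroup.eq_one_of_inv_eq_self (hσ : Function.Involutive σ)
    (hprincipal : ∀ I : Ideal R, I ≠ ⊥ → I.map σ = I → I.IsPrincipal)
    (hnorm : ∀ x y : R, Associated (x * σ x) (y * σ y) → x * σ x = y * σ y)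
    {c : ClassGroup R} (hc : c⁻¹ = c) : c = 1 := by
  obtain ⟨⟨I, hI⟩, rfl⟩ := ClassGroup.mk0_surjective c
  have hI0 : I ≠ ⊥ := mem_nonZeroDivisors_iff_ne_zero.mp hI
  have hIσ : I.map σ ∈ (Ideal R)⁰ := mem_nonZeroDivisors_iff_ne_zero.mpr
    ((map_eq_bot_iff_of_injective σ.injective).not.mpr hI0)
  have hconj : ClassGroup.mk0 ⟨I.map σ, hIσ⟩ = ClassGroup.mk0 ⟨I, hI⟩ := by
    rw [← hc, eq_inv_iff_mul_eq_one, ← map_mul, ClassGroup.mk0_eq_one_iff]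
    refine hprincipal _ (mul_ne_zero (nonZeroDivisors.coe_ne_zero _) hI0) ?_
    rw [Submonoid.coe_mul, Ideal.map_mul, map_map_of_involutive hσ, mul_comm]
  obtain ⟨x, y, hx, -, h⟩ := ClassGroup.mk0_eq_mk0_iff.mp hconj
  obtain ⟨g, hg, hgI⟩ := exists_map_span_singleton_mul_eq hσ hx
    (hnorm _ _ (associated_mul_apply_of_span_mul_map_eq hσ hI0 h)) h
  have hgI0 : span {g} * I ∈ (Ideal R)⁰ := mul_mem
    (mem_nonZeroDivisors_iff_ne_zero.mpr ((span_singleton_eq_bot.not).mpr hg)) hI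
  have hclass : ClassGroup.mk0 ⟨span {g} * I, hgI0⟩ = ClassGroup.mk0 ⟨I, hI⟩ :=
    ClassGroup.mk0_eq_mk0_iff.mpr ⟨1, g, one_ne_zero, hg, by rw [span_singleton_one, top_mul]⟩
  rw [← hclass, ClassGroup.mk0_eq_one_iff]
  exact hprincipal _ (mem_nonZeroDivisors_iff_ne_zero.mp hgI0) hgI

end ClassGroup

theorem NumberField.RingOfIntegers.eq_one_of_isUnit_of_coe_eq_ratCast {K : Type*} [Field K]
    [NumberField K] {u : 𝓞 K} (hu : IsUnit u) {r : ℚ} (hr : 0 < r) (h : (u : K) = r) : u = 1 := by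
  have hnorm := NumberField.isUnit_iff_norm.mp hu
  rw [RingOfIntegers.coe_norm, h, ← map_ratCast (algebraMap ℚ K), Rat.cast_id,
    Algebra.norm_algebraMap, abs_of_pos (by positivity),
    pow_eq_one_iff_of_nonneg hr.le Module.finrank_pos.ne'] at hnorm
  exact RingOfIntegers.ext (by rw [h, hnorm]; simp)

open Polynomial in
theorem isIntegral_of_sq_eq_neg {K : Type*} [Field K] {q : ℕ} {α : K} (hα : α ^ 2 = -(q : K)) :
    IsIntegral ℤ α :=
  ⟨X ^ 2 + C (q : ℤ), monic_X_pow_add_C _ two_ne_zero, by simp [hα]⟩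

section SquareRoot

variable {K : Type*} [Field K] [CharZero K] {q : ℕ} {α : K}

theorem ratCast_ne_of_sq_eq_neg (hq : q ≠ 0) (hα : α ^ 2 = -(q : K)) (r : ℚ) : (r : K) ≠ α := by
  rintro rfl
  have : r ^ 2 = -(q : ℚ) := by exact_mod_cast hα
  have : (0 : ℚ) < q := by exact_mod_cast hq.bot_lt
  nlinarith [sq_nonneg r]

open Polynomial in
theorem isIntegral_one_add_div_two (hq4 : q % 4 = 3) (hα : α ^ 2 = -(q : K)) :
    IsIntegral ℤ ((1 + α) / 2) := by
  obtain ⟨m, hm⟩ : ∃ m : ℕ, q + 1 = 4 * m := ⟨(q + 1) / 4, by omega⟩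
  refine ⟨X ^ 2 - X + C (m : ℤ), by monicity!, ?_⟩
  have hm' : (q : K) + 1 = 4 * m := by exact_mod_cast hm
  rw [eval₂_add, eval₂_sub, eval₂_pow, eval₂_X, eval₂_C, algebraMap_int_eq, eq_intCast,
    Int.cast_natCast]
  linear_combination (1 / 4 : K) * hα - (1 / 4 : K) * hm'

theorem exists_eq_ratCast_add_ratCast_mul (hq : q ≠ 0) (hdeg : Module.finrank ℚ K = 2)
    (hα : α ^ 2 = -(q : K)) (z : K) : ∃ a b : ℚ, z = a + b * α := by
  have hind : LinearIndependent ℚ ![1, α] :=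
    (LinearIndependent.pair_iff' one_ne_zero).mpr fun r ↦ by
      simpa [Rat.smul_one_eq_cast] using ratCast_ne_of_sq_eq_neg hq hα r
  have hspan := hind.span_eq_top_of_card_eq_finrank (by simp [hdeg])
  have hz : z ∈ Submodule.span ℚ {1, α} := by
    rw [← Matrix.range_cons_cons_empty, hspan]; exact Submodule.mem_top
  obtain ⟨a, b, hab⟩ := Submodule.mem_span_pair.mp hz
  exact ⟨a, b, by rw [← hab, Rat.smul_def, Rat.smul_def, mul_one]⟩

theorem exists_algEquiv_apply_eq_neg (hq : q ≠ 0) (hdeg : Module.finrank ℚ K = 2)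
    (hα : α ^ 2 = -(q : K)) : ∃ σ : K ≃ₐ[ℚ] K, σ α = -α := by
  have : Algebra.IsQuadraticExtension ℚ K := ⟨hdeg⟩
  obtain ⟨σ, hσ⟩ : ∃ σ : Gal(K/ℚ), σ α ≠ α := by
    by_contra! h
    obtain ⟨r, hr⟩ := (IsGalois.mem_range_algebraMap_iff_fixed α).mpr h
    exact ratCast_ne_of_sq_eq_neg hq hα r (by simpa using hr)
  refine ⟨σ, (sq_eq_sq_iff_eq_or_eq_neg.mp ?_).resolve_left hσ⟩
  rw [← map_pow, hα, map_neg, map_natCast]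

end SquareRoot

section Conjugation

variable {K : Type*} [Field K] [CharZero K] {q : ℕ} {α : K} {σ : K ≃ₐ[ℚ] K}

theorem AlgEquiv.apply_ratCast_add_ratCast_mul (hσ : σ α = -α) (a b : ℚ) :
    σ (a + b * α) = a - b * α := by
  simp [hσ, sub_eq_add_neg]

variable (hq : q ≠ 0) (hdeg : Module.finrank ℚ K = 2) (hα : α ^ 2 = -(q : K))
include hq hdeg hα

theorem AlgEquiv.involutive_of_apply_eq_neg (hσ : σ α = -α) : Function.Involutive σ := by
  intro z
  obtain ⟨a, b, rfl⟩ := exists_eq_ratCast_add_ratCast_mul hq hdeg hα z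
  rw [σ.apply_ratCast_add_ratCast_mul hσ]
  simp [hσ]

theorem AlgEquiv.exists_pos_mul_apply_eq_ratCast (hσ : σ α = -α) {z : K} (hz : z ≠ 0) :
    ∃ r : ℚ, 0 < r ∧ z * σ z = r := by
  obtain ⟨a, b, rfl⟩ := exists_eq_ratCast_add_ratCast_mul hq hdeg hα z
  refine ⟨a ^ 2 + q * b ^ 2, ?_, ?_⟩
  · have hq' : (0 : ℚ) < q := by exact_mod_cast hq.bot_lt
    by_contra! h
    have hbq := mul_nonneg hq'.le (sq_nonneg b)
    have ha : a = 0 := by nlinarith [sq_nonneg a]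
    have hb : b = 0 := by
      have : (q : ℚ) * b ^ 2 = 0 := by nlinarith [sq_nonneg a]
      simpa [hq'.ne'] using this
    simp [ha, hb] at hz
  · rw [σ.apply_ratCast_add_ratCast_mul hσ]
    push_cast
    linear_combination (-(b : K) ^ 2) * hα

end Conjugation

section RingOfIntegers

open NumberField.RingOfIntegers

variable {K : Type*} [Field K] [NumberField K] {q : ℕ} {α : K} {σ : K ≃ₐ[ℚ] K}
  (hdeg : Module.finrank ℚ K = 2) (hα : α ^ 2 = -(q : K)) (hσ : σ α = -α)

include hdeg hα hσ in
theorem mul_mapRingEquiv_eq_of_associated (hq : q ≠ 0) {x y : 𝓞 K}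
    (h : Associated (x * mapRingEquiv σ x) (y * mapRingEquiv σ y)) :
    x * mapRingEquiv σ x = y * mapRingEquiv σ y := by
  obtain rfl | hx := eq_or_ne x 0
  · rw [zero_mul] at h ⊢
    exact (h.eq_zero_iff.mp rfl).symm
  obtain ⟨u, hu⟩ := h
  have hy : y ≠ 0 := by
    rintro rfl
    simp [hx] at hu
  obtain ⟨r, hr, hxr⟩ := σ.exists_pos_mul_apply_eq_ratCast hq hdeg hα hσ (coe_ne_zero_iff.mpr hx)
  obtain ⟨s, hs, hys⟩ := σ.exists_pos_mul_apply_eq_ratCast hq hdeg hα hσ (coe_ne_zero_iff.mpr hy)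
  have hus : ((u : 𝓞 K) : K) = (s / r : ℚ) := by
    have hK : (x : K) * σ x * (u : 𝓞 K) = y * σ y := congrArg ((↑) : 𝓞 K → K) hu
    rw [hxr, hys] at hK
    rw [Rat.cast_div, eq_div_iff (by exact_mod_cast hr.ne'), mul_comm, hK]
  rw [← hu, eq_one_of_isUnit_of_coe_eq_ratCast u.isUnit (div_pos hs hr) hus, mul_one]

include hdeg in
theorem absNorm_span_natCast_of_finrank_eq_two (n : ℕ) :
    absNorm (span {(n : 𝓞 K)}) = n ^ 2 := by
  rw [absNorm_span_natCast, NumberField.RingOfIntegers.rank, hdeg]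

include hdeg in
theorem absNorm_span_of_sq_eq_neg {a : 𝓞 K} (ha : a ^ 2 = -(q : 𝓞 K)) :
    absNorm (span {a}) = q := by
  have h := congrArg absNorm (span_singleton_pow a 2)
  rw [ha, span_singleton_neg, absNorm_span_natCast_of_finrank_eq_two hdeg, map_pow] at h
  exact Nat.pow_left_injective two_ne_zero h

include hdeg hσ in
theorem eq_span_of_map_eq_self_of_absNorm_prime (hq : q.Prime) (hq4 : q % 4 = 3)
    {P : Ideal (𝓞 K)} (hPσ : P.map (mapRingEquiv σ) = P) (hP : (absNorm P).Prime) :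
    P = span {⟨α, isIntegral_of_sq_eq_neg hα⟩} := by
  set a : 𝓞 K := ⟨α, isIntegral_of_sq_eq_neg hα⟩
  set b : 𝓞 K := ⟨(1 + α) / 2, isIntegral_one_add_div_two hq4 hα⟩
  have hba : b - mapRingEquiv σ b = a := RingOfIntegers.ext <|
    show (1 + α) / 2 - σ ((1 + α) / 2) = α by
      rw [map_div₀, map_add, map_one, hσ, map_ofNat]; ring
  have haP : a ∈ P := hba ▸ sub_apply_mem_of_map_eq_self hP hPσ b
  have ha : absNorm (span {a}) = q :=
    absNorm_span_of_sq_eq_neg hdeg (RingOfIntegers.ext <| by push_cast; exact hα)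
  have hPq : absNorm P = q := (Nat.prime_dvd_prime_iff_eq hP hq).mp
    (ha ▸ absNorm_dvd_absNorm_of_le ((span_singleton_le_iff_mem P).mpr haP))
  exact Ideal.eq_of_dvd_of_absNorm_eq (fun h ↦ hq.ne_zero (by rw [← ha, h, absNorm_bot]))
    (dvd_iff_le.mpr ((span_singleton_le_iff_mem P).mpr haP)) (hPq.trans ha.symm)

include hdeg hα hσ in
theorem isPrincipal_inf_map_mapRingEquiv (hq : q.Prime) (hq4 : q % 4 = 3) (P : Ideal (𝓞 K))
    [hPmax : P.IsMaximal] : (P ⊓ P.map (mapRingEquiv σ)).IsPrincipal := by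
  obtain ⟨p, n, hn, hpP, hp, hPn⟩ := exists_prime_and_absNorm_eq_pow P
  have hp0 : span {(p : 𝓞 K)} ≠ ⊥ := by simp [hp.ne_zero]
  have hpn := absNorm_span_natCast_of_finrank_eq_two hdeg p
  by_cases hPσ : P.map (mapRingEquiv σ) = P
  · rw [hPσ, inf_idem]
    have hPp : P ∣ span {(p : 𝓞 K)} := dvd_iff_le.mpr ((span_singleton_le_iff_mem P).mpr hpP)
    have hn2 : n ≤ 2 := by
      have := map_dvd absNorm hPp
      rwa [hPn, hpn, Nat.pow_dvd_pow_iff_le_right hp.one_lt] at this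
    obtain rfl | rfl : n = 1 ∨ n = 2 := by omega
    · exact ⟨_, eq_span_of_map_eq_self_of_absNorm_prime hdeg hα hσ hq hq4 hPσ
        (by rwa [hPn, pow_one])⟩
    · exact ⟨p, eq_of_dvd_of_absNorm_eq hp0 hPp (by rw [hPn, hpn])⟩
  · have hcop : P ⊔ P.map (mapRingEquiv σ) = ⊤ :=
      hPmax.coprime_of_ne inferInstance (Ne.symm hPσ)
    rw [← mul_eq_inf_of_coprime hcop]
    have hpPσ : (p : 𝓞 K) ∈ P.map (mapRingEquiv σ) := by
      have := mem_map_of_mem (mapRingEquiv (σ : K ≃+* K)) hpP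
      rwa [map_natCast] at this
    have hdvd : P * P.map (mapRingEquiv σ) ∣ span {(p : 𝓞 K)} := by
      rw [dvd_iff_le, mul_eq_inf_of_coprime hcop, span_singleton_le_iff_mem]
      exact ⟨hpP, hpPσ⟩
    have hn1 : n = 1 := by
      have := map_dvd absNorm hdvd
      rw [map_mul, absNorm_map_ringEquiv, hPn, hpn, ← pow_add,
        Nat.pow_dvd_pow_iff_le_right hp.one_lt] at this
      omega
    refine ⟨p, eq_of_dvd_of_absNorm_eq hp0 hdvd ?_⟩
    rw [map_mul, absNorm_map_ringEquiv, hPn, hpn, hn1]; ring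

end RingOfIntegers

/-- For every prime `q` with `q ≡ 3 (mod 4)`, the class number of the imaginary quadratic
field `ℚ(√−q)` (formalized as any degree-2 number field containing a square root of `−q`)
is odd. -/
theorem odd_classNumber_of_sqrt_neg_prime_three_mod_four
    (q : ℕ) (hq : q.Prime) (hq4 : q % 4 = 3)
    (K : Type) [Field K] [NumberField K]
    (hdeg : Module.finrank ℚ K = 2)
    (α : K) (hα : α ^ 2 = -(q : K)) :
    Odd (NumberField.classNumber K) := by
  obtain ⟨σ, hσ⟩ := exists_algEquiv_apply_eq_neg hq.ne_zero hdeg hα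
  set τ := RingOfIntegers.mapRingEquiv (σ : K ≃+* K)
  have hτ : Function.Involutive τ := fun x ↦
    RingOfIntegers.ext (σ.involutive_of_apply_eq_neg hq.ne_zero hdeg hα hσ x)
  have hprincipal (I : Ideal (𝓞 K)) (hI : I ≠ ⊥) (hIτ : I.map τ = I) : I.IsPrincipal :=
    isPrincipal_of_map_eq_self hτ
      (fun P _ ↦ isPrincipal_inf_map_mapRingEquiv hdeg hα hσ hq hq4 P) hI hIτ
  have hfree : MonoidHom.FixedPointFree (invMonoidHom : ClassGroup (𝓞 K) →* _) := fun c hc ↦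
    ClassGroup.eq_one_of_inv_eq_self hτ hprincipal
      (fun _ _ ↦ mul_mapRingEquiv_eq_of_associated hdeg hα hσ hq.ne_zero) hc
  rw [NumberField.classNumber, Fintype.card_eq_nat_card]
  exact hfree.odd_card_of_involutive inv_involutive
end

section
/- Let Δ be a fundamental discriminant and N ≥ 1 an integer. If ℚ(√Δ) is contained in the cyclotomic field ℚ(ζ_N) (i.e., some element of ℚ(ζ_N) has square Δ), then |Δ| divides N. In particular |Δ| is the conductor of the quadratic field ℚ(√Δ). -/
/-!
Write `Δ = χ(-1) 2^a P*`, where `P` is odd and squarefree, `P* = (-1 | P) P = ∏_{q ∣ P} q*`, and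
`χ ∈ {1, χ₄, χ₈, χ₈'}` is a character modulo `2^a`. In `ℚ(ζ_M)`, `M = 2^a P N`, the product `s` of
the Gauss sums of `χ` and of the Legendre symbols modulo the primes `q ∣ P` is a square root of
`Δ`, and the automorphism `ζ ↦ ζ^t` multiplies `s` by the Kronecker character
`κ(t) = χ(t) (t | P)`. A square root of `Δ` in `ℚ(ζ_N)` is `±s`, so `κ(t) = 1` whenever
`t ≡ 1 (mod N)`. If `2^a` or a prime `q ∣ P` did not divide `N`, the Chinese remainder theorem
would produce such a `t` with `κ(t) = -1`.
-/

/-- An integer `Δ ≠ 1` is a fundamental discriminant if either `Δ ≡ 1 (mod 4)` and `Δ` is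
squarefree, or `Δ = 4m` where `m` is a squarefree integer with `m ≡ 2` or `3 (mod 4)`. -/
def IsFundamentalDiscriminant (Δ : ℤ) : Prop :=
  Δ ≠ 1 ∧ ((Δ % 4 = 1 ∧ Squarefree Δ) ∨
    ∃ m : ℤ, Δ = 4 * m ∧ Squarefree m ∧ (m % 4 = 2 ∨ m % 4 = 3))

open Finset Polynomial
open scoped NumberTheorySymbols

theorem ZMod.sum_eq_sum_range {M : Type*} [AddCommMonoid M] (n : ℕ) [NeZero n]
    (f : ZMod n → M) : ∑ x, f x = ∑ k ∈ range n, f k := by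
  obtain ⟨k, rfl⟩ := Nat.exists_eq_succ_of_ne_zero (NeZero.ne n)
  refine Eq.trans ?_ (Fin.sum_univ_eq_sum_range (fun i => f i) (k + 1))
  exact sum_congr rfl fun x _ => congrArg f (ZMod.natCast_zmod_val (n := k + 1) x).symm

namespace jacobiSym

theorem eq_quadraticChar (q : ℕ) [Fact q.Prime] (a : ℤ) :
    J(a | q) = quadraticChar (ZMod q) a :=
  (legendreSym.to_jacobiSym q a).symm

theorem natCast_left_of_modEq {a b q : ℕ} (h : a ≡ b [MOD q]) : J(a | q) = J(b | q) :=
  mod_left' (Int.natCast_modEq_iff.mpr h)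

theorem natCast_left_eq_one_of_modEq {a q : ℕ} (h : a ≡ 1 [MOD q]) : J(a | q) = 1 := by
  rw [natCast_left_of_modEq h, Nat.cast_one, one_left]

theorem finset_prod_right {ι : Type*} (a : ℤ) (s : Finset ι) (b : ι → ℕ)
    (hb : ∀ i ∈ s, b i ≠ 0) : J(a | ∏ i ∈ s, b i) = ∏ i ∈ s, J(a | b i) := by
  classical
  induction s using Finset.induction_on with
  | empty => simp [one_right]
  | insert i s hi ih =>
    rw [prod_insert hi, prod_insert hi, mul_right' a (hb i (mem_insert_self i s))
      (prod_ne_zero_iff.mpr fun j hj => hb j (mem_insert_of_mem hj)),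
      ih fun j hj => hb j (mem_insert_of_mem hj)]

theorem eq_prod_primeFactors (a : ℤ) {P : ℕ} (hP : Squarefree P) :
    J(a | P) = ∏ q ∈ P.primeFactors, J(a | q) := by
  conv_lhs => rw [← Nat.prod_primeFactors_of_squarefree hP]
  exact finset_prod_right a _ _ fun q hq => (Nat.prime_of_mem_primeFactors hq).ne_zero

theorem neg_one_mul_natAbs {m : ℤ} (hm : Odd m) :
    J(-1 | m.natAbs) * m.natAbs = ZMod.χ₄ m * m := by
  rw [at_neg_one (Int.natAbs_odd.mpr hm)]
  obtain ⟨n, rfl | rfl⟩ := Int.eq_nat_or_neg m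
  · simp
  · have h : ZMod.χ₄ (-1) = -1 := rfl
    rw [Int.natAbs_neg, Int.natAbs_natCast, Int.cast_neg, neg_eq_neg_one_mul ((n : ℤ) : ZMod 4),
      map_mul, h]
    push_cast
    ring

theorem exists_eq_neg_one {q : ℕ} [Fact q.Prime] (hq : q ≠ 2) : ∃ b : ℕ, J(b | q) = -1 := by
  obtain ⟨a, ha⟩ := quadraticChar_exists_neg_one (F := ZMod q) (by rwa [ZMod.ringChar_zmod_n])
  exact ⟨a.val, by rw [eq_quadraticChar]; simpa using ha⟩

end jacobiSym

theorem Nat.coprime_of_jacobiSym_ne_zero {a q : ℕ} [NeZero q] (h : J(a | q) ≠ 0) :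
    a.Coprime q := by
  rwa [Ne, jacobiSym.eq_zero_iff_not_coprime, not_not, Int.gcd_natCast_natCast] at h

theorem Nat.exists_coprime_modEq_of_not_dvd {p a M N f : ℕ} (hp : p.Prime) (ha : a ≠ 0)
    (hM : M ≠ 0) (hNM : N ∣ M) (hpN : ¬p ^ a ∣ N) (hf : f ≡ 1 [MOD p ^ (a - 1)])
    (hfp : f.Coprime p) :
    ∃ t, t.Coprime M ∧ t ≡ 1 [MOD N] ∧ t ≡ f [MOD p ^ a] ∧ t ≡ 1 [MOD ordCompl[p] M] := by
  have hcop : (p ^ a).Coprime (ordCompl[p] M) := (Nat.coprime_ordCompl hp hM).pow_left a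
  obtain ⟨t, htf, ht1⟩ := Nat.chineseRemainder hcop f 1
  have htp : t.Coprime p := by
    rw [Nat.Coprime, (htf.of_dvd (dvd_pow_self p ha)).gcd_eq]
    exact hfp
  refine ⟨t, ?_, ?_, htf, ht1⟩
  · rw [← Nat.ordProj_mul_ordCompl_eq_self M p]
    refine Nat.Coprime.mul_right (htp.pow_right _) ?_
    rw [Nat.Coprime, ht1.gcd_eq]
    exact Nat.gcd_one_left _
  · have hN : N ∣ p ^ (a - 1) * ordCompl[p] M := by
      rw [← Nat.ordProj_mul_ordCompl_eq_self N p]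
      refine mul_dvd_mul (pow_dvd_pow p ?_) (Nat.ordCompl_dvd_ordCompl_of_dvd hNM p)
      have : ¬a ≤ N.factorization p := fun h =>
        hpN ((hp.pow_dvd_iff_le_factorization (ne_zero_of_dvd_ne_zero hM hNM)).mpr h)
      omega
    refine Nat.ModEq.of_dvd hN ((Nat.modEq_and_modEq_iff_modEq_mul ?_).mp ⟨?_, ht1⟩)
    · exact (Nat.coprime_ordCompl hp hM).pow_left _
    · exact (htf.of_dvd (pow_dvd_pow p (Nat.sub_le a 1))).trans hf

theorem IsFundamentalDiscriminant.exists_eq_mul_jacobiSym {Δ : ℤ}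
    (hΔ : IsFundamentalDiscriminant Δ) :
    ∃ P : ℕ, Odd P ∧ Squarefree P ∧
      (Δ = J(-1 | P) * P ∧ Δ.natAbs = P ∨
        Δ = -4 * (J(-1 | P) * P) ∧ Δ.natAbs = 4 * P ∨
        Δ = 8 * (J(-1 | P) * P) ∧ Δ.natAbs = 8 * P ∨
        Δ = -8 * (J(-1 | P) * P) ∧ Δ.natAbs = 8 * P) := by
  obtain ⟨-, ⟨h4, hsf⟩ | ⟨m, rfl, hsf, hm | hm⟩⟩ := hΔ
  · have hodd : Odd Δ := Int.odd_iff.mpr (by omega)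
    refine ⟨Δ.natAbs, Int.natAbs_odd.mpr hodd, Int.squarefree_natAbs.mpr hsf, Or.inl ⟨?_, rfl⟩⟩
    rw [jacobiSym.neg_one_mul_natAbs hodd, ZMod.χ₄_int_one_mod_four h4, one_mul]
  · obtain ⟨k, rfl⟩ : (2 : ℤ) ∣ m := by omega
    have hodd : Odd k := Int.odd_iff.mpr (by omega)
    refine ⟨k.natAbs, Int.natAbs_odd.mpr hodd,
      Int.squarefree_natAbs.mpr (hsf.squarefree_of_dvd (dvd_mul_left k 2)), ?_⟩
    rw [jacobiSym.neg_one_mul_natAbs hodd]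
    have habs : (4 * (2 * k)).natAbs = 8 * k.natAbs := by omega
    rcases (by omega : k % 4 = 1 ∨ k % 4 = 3) with h | h
    · exact Or.inr (Or.inr (Or.inl ⟨by rw [ZMod.χ₄_int_one_mod_four h]; ring, habs⟩))
    · exact Or.inr (Or.inr (Or.inr ⟨by rw [ZMod.χ₄_int_three_mod_four h]; ring, habs⟩))
  · have hodd : Odd m := Int.odd_iff.mpr (by omega)
    refine ⟨m.natAbs, Int.natAbs_odd.mpr hodd, Int.squarefree_natAbs.mpr hsf,
      Or.inr (Or.inl ⟨?_, by omega⟩)⟩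
    rw [jacobiSym.neg_one_mul_natAbs hodd, ZMod.χ₄_int_three_mod_four hm]
    ring

section GaussSum

variable {K : Type*} [CommRing K] {F : Type*} [FunLike F K K] [RingHomClass F K K]

theorem map_gaussSum_of_isQuadratic {R : Type*} [CommRing R] [Fintype R] {χ : MulChar R ℤ}
    (hχ : χ.IsQuadratic) (ψ : AddChar R K) (σ : F) (a : Rˣ) (hσ : ∀ x, σ (ψ x) = ψ (a * x)) :
    σ (gaussSum (χ.ringHomComp (Int.castRingHom K)) ψ) =
      χ a * gaussSum (χ.ringHomComp (Int.castRingHom K)) ψ := by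
  have hshift : σ (gaussSum (χ.ringHomComp (Int.castRingHom K)) ψ) =
      gaussSum (χ.ringHomComp (Int.castRingHom K)) (ψ.mulShift a) := by
    simp [gaussSum, hσ, AddChar.mulShift_apply]
  rw [hshift, gaussSum_mulShift_eq, (hχ.comp _).inv, MulChar.ringHomComp_apply]
  rfl

theorem map_gaussSum_zmodChar {n : ℕ} [NeZero n] {χ : MulChar (ZMod n) ℤ} (hχ : χ.IsQuadratic)
    {ζ : K} (hζ : ζ ^ n = 1) (σ : F) {t : ℕ} (ht : t.Coprime n) (hσ : σ ζ = ζ ^ t) :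
    σ (gaussSum (χ.ringHomComp (Int.castRingHom K)) (AddChar.zmodChar n hζ)) =
      χ t * gaussSum (χ.ringHomComp (Int.castRingHom K)) (AddChar.zmodChar n hζ) := by
  refine map_gaussSum_of_isQuadratic hχ _ σ (ZMod.unitOfCoprime t ht) fun x => ?_
  rw [ZMod.coe_unitOfCoprime, AddChar.zmodChar_apply, map_pow, hσ, ← pow_mul,
    ← AddChar.zmodChar_apply' hζ]
  simp

theorem gaussSum_zmod_one (χ : MulChar (ZMod 1) K) (ψ : AddChar (ZMod 1) K) :
    gaussSum χ ψ = 1 := by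
  rw [gaussSum, Fintype.sum_subsingleton _ 0, AddChar.map_zero_eq_one,
    show (0 : ZMod 1) = 1 from rfl, MulChar.map_one, one_mul]

open ZMod in
theorem gaussSum_χ₄_sq [IsDomain K] {i : K} (hi : IsPrimitiveRoot i 4) :
    gaussSum (χ₄.ringHomComp (Int.castRingHom K)) (AddChar.zmodChar 4 hi.pow_eq_one) ^ 2 =
      χ₄.ringHomComp (Int.castRingHom K) (-1) * 4 := by
  have hi2 : i ^ 2 = -1 := (hi.pow (by norm_num) (by norm_num : 4 = 2 * 2)).eq_neg_one_of_two_right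
  have hχ : χ₄ (-1) = -1 := rfl
  rw [gaussSum, ZMod.sum_eq_sum_range]
  simp [sum_range_succ, AddChar.zmodChar_apply', hχ]
  linear_combination (i ^ 4 - 3 * i ^ 2 + 4) * hi2

open ZMod in
theorem gaussSum_χ₈_sq [IsDomain K] {r : K} (hr : IsPrimitiveRoot r 8) :
    gaussSum (χ₈.ringHomComp (Int.castRingHom K)) (AddChar.zmodChar 8 hr.pow_eq_one) ^ 2 =
      χ₈.ringHomComp (Int.castRingHom K) (-1) * 8 := by
  have hr4 : r ^ 4 = -1 := (hr.pow (by norm_num) (by norm_num : 8 = 4 * 2)).eq_neg_one_of_two_right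
  have hχ : χ₈ (-1) = 1 := rfl
  rw [gaussSum, ZMod.sum_eq_sum_range]
  simp [sum_range_succ, AddChar.zmodChar_apply', hχ]
  linear_combination (r ^ 10 - 2 * r ^ 8 - 2 * r ^ 6 + 6 * r ^ 4 + r ^ 2 - 8) * hr4

open ZMod in
theorem gaussSum_χ₈'_sq [IsDomain K] {r : K} (hr : IsPrimitiveRoot r 8) :
    gaussSum (χ₈'.ringHomComp (Int.castRingHom K)) (AddChar.zmodChar 8 hr.pow_eq_one) ^ 2 =
      χ₈'.ringHomComp (Int.castRingHom K) (-1) * 8 := by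
  have hr4 : r ^ 4 = -1 := (hr.pow (by norm_num) (by norm_num : 8 = 4 * 2)).eq_neg_one_of_two_right
  have hχ : χ₈' (-1) = -1 := rfl
  rw [gaussSum, ZMod.sum_eq_sum_range]
  simp [sum_range_succ, AddChar.zmodChar_apply', hχ]
  linear_combination (r ^ 10 + 2 * r ^ 8 - 2 * r ^ 6 - 6 * r ^ 4 + r ^ 2 + 8) * hr4

-- Written with the Jacobi symbol rather than `quadraticChar (ZMod q)`, so that it needs no
-- `Fact q.Prime` instance inside products over `P.primeFactors`.
def quadGaussSum (q : ℕ) (ζ : K) : K :=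
  ∑ x ∈ range q, (J(x | q) : K) * ζ ^ x

theorem quadGaussSum_eq_gaussSum (q : ℕ) [Fact q.Prime] {ζ : K} (hζ : ζ ^ q = 1) :
    quadGaussSum q ζ = gaussSum ((quadraticChar (ZMod q)).ringHomComp (Int.castRingHom K))
      (AddChar.zmodChar q hζ) := by
  rw [gaussSum, ZMod.sum_eq_sum_range, quadGaussSum]
  refine sum_congr rfl fun x _ => ?_
  rw [MulChar.ringHomComp_apply, AddChar.zmodChar_apply', jacobiSym.eq_quadraticChar]
  simp

theorem quadGaussSum_sq [IsDomain K] [CharZero K] {q : ℕ} [Fact q.Prime] (hq : q ≠ 2) {ζ : K}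
    (hζ : IsPrimitiveRoot ζ q) : quadGaussSum q ζ ^ 2 = J(-1 | q) * q := by
  have hchar : ringChar (ZMod q) ≠ 2 := by rwa [ZMod.ringChar_zmod_n]
  rw [quadGaussSum_eq_gaussSum q hζ.pow_eq_one, gaussSum_sq
    ((MulChar.ringHomComp_ne_one_iff (RingHom.injective_int _)).mpr (quadraticChar_ne_one hchar))
    ((quadraticChar_isQuadratic _).comp _) (AddChar.zmodChar_primitive_of_primitive_root q hζ),
    MulChar.ringHomComp_apply, ZMod.card, jacobiSym.eq_quadraticChar]
  simp

theorem map_quadGaussSum {q : ℕ} [Fact q.Prime] {ζ : K} (hζ : ζ ^ q = 1) (σ : F) {t : ℕ}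
    (ht : t.Coprime q) (hσ : σ ζ = ζ ^ t) :
    σ (quadGaussSum q ζ) = J(t | q) * quadGaussSum q ζ := by
  rw [quadGaussSum_eq_gaussSum q hζ,
    map_gaussSum_zmodChar (quadraticChar_isQuadratic _) hζ σ ht hσ, jacobiSym.eq_quadraticChar]
  simp

theorem prod_quadGaussSum_sq [IsDomain K] [CharZero K] {P M : ℕ} [NeZero M] (hP : Odd P)
    (hPsf : Squarefree P) (hPM : P ∣ M) {ζ : K} (hζ : IsPrimitiveRoot ζ M) :
    (∏ q ∈ P.primeFactors, quadGaussSum q (ζ ^ (M / q))) ^ 2 = J(-1 | P) * P := by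
  have hcast : (P : K) = ∏ q ∈ P.primeFactors, (q : K) := by
    rw [← Nat.cast_prod, Nat.prod_primeFactors_of_squarefree hPsf]
  rw [jacobiSym.eq_prod_primeFactors _ hPsf, Int.cast_prod, hcast, ← prod_mul_distrib,
    ← prod_pow]
  refine prod_congr rfl fun q hq => ?_
  have hqM : q ∣ M := (Nat.dvd_of_mem_primeFactors hq).trans hPM
  have : Fact q.Prime := ⟨Nat.prime_of_mem_primeFactors hq⟩
  refine quadGaussSum_sq ?_ (hζ.pow (NeZero.pos M) (Nat.div_mul_cancel hqM).symm)
  rintro rfl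
  exact hP.not_two_dvd_nat (Nat.dvd_of_mem_primeFactors hq)

theorem map_prod_quadGaussSum {P M : ℕ} (hPsf : Squarefree P) (hPM : P ∣ M) {ζ : K}
    (hζ : ζ ^ M = 1) (σ : F) {t : ℕ} (ht : t.Coprime M) (hσ : σ ζ = ζ ^ t) :
    σ (∏ q ∈ P.primeFactors, quadGaussSum q (ζ ^ (M / q))) =
      J(t | P) * ∏ q ∈ P.primeFactors, quadGaussSum q (ζ ^ (M / q)) := by
  rw [map_prod, jacobiSym.eq_prod_primeFactors _ hPsf, Int.cast_prod, ← prod_mul_distrib]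
  refine prod_congr rfl fun q hq => ?_
  have hqM : q ∣ M := (Nat.dvd_of_mem_primeFactors hq).trans hPM
  have : Fact q.Prime := ⟨Nat.prime_of_mem_primeFactors hq⟩
  refine map_quadGaussSum ?_ σ (ht.coprime_dvd_right hqM) ?_
  · rw [← pow_mul, Nat.div_mul_cancel hqM, hζ]
  · rw [map_pow, hσ, ← pow_mul, ← pow_mul, mul_comm]

end GaussSum

-- Mathlib's instance is stated for the algebra `CyclotomicField.algebra`, which does not unify
-- reducibly with the instance `DivisionRing.toRatAlgebra` found by instance search.
instance CyclotomicField.isCyclotomicExtension_rat (M : ℕ) [NeZero M] :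
    IsCyclotomicExtension {M} ℚ (CyclotomicField M ℚ) :=
  haveI : NeZero (M : ℚ) := ⟨Nat.cast_ne_zero.mpr (NeZero.ne M)⟩
  CyclotomicField.isCyclotomicExtension M ℚ

namespace IsCyclotomicExtension

variable {M N : ℕ} [NeZero M] {K : Type*} [Field K] [Algebra ℚ K]
  [IsCyclotomicExtension {M} ℚ K]

theorem exists_algEquiv_pow {t : ℕ} (ht : t.Coprime M) :
    ∃ σ : K ≃ₐ[ℚ] K, ∀ ρ : K, ρ ^ M = 1 → σ ρ = ρ ^ t := by
  have hζ := zeta_spec M ℚ K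
  refine ⟨fromZetaAut (hζ.pow_of_coprime t ht) (cyclotomic.irreducible_rat (NeZero.pos M)),
    fun ρ hρ => ?_⟩
  obtain ⟨i, -, rfl⟩ := hζ.eq_pow_of_pow_eq_one hρ
  rw [map_pow, fromZetaAut_spec, ← pow_mul, ← pow_mul, mul_comm]

theorem algEquiv_apply_eq_self_of_sq_eq [NeZero N] {L : Type*} [Field L] [Algebra ℚ L]
    [IsCyclotomicExtension {N} ℚ L] (hNM : N ∣ M) {d : ℤ} (hN : ∃ x : L, x ^ 2 = d) {s : K}
    (hs : s ^ 2 = d) {σ : K ≃ₐ[ℚ] K} (hσ : ∀ ρ : K, ρ ^ N = 1 → σ ρ = ρ) : σ s = s := by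
  obtain ⟨x, hx⟩ := hN
  have hζN := zeta_spec N ℚ L
  have hρ : IsPrimitiveRoot (zeta M ℚ K ^ (M / N)) N :=
    (zeta_spec M ℚ K).pow (NeZero.pos M) (Nat.div_mul_cancel hNM).symm
  let f := (hζN.embeddingsEquivPrimitiveRoots K (cyclotomic.irreducible_rat (NeZero.pos N))).symm
    ⟨_, (mem_primitiveRoots (NeZero.pos N)).mpr hρ⟩
  have hσf : (σ : K →ₐ[ℚ] K).comp f = f := by
    refine (hζN.powerBasis ℚ).algHom_ext ?_
    rw [IsPrimitiveRoot.powerBasis_gen, AlgHom.comp_apply, AlgEquiv.coe_toAlgHom]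
    exact hσ _ (by rw [← map_pow, hζN.pow_eq_one, map_one])
  have hfx : σ (f x) = f x := congrArg (fun g => g x) hσf
  rcases sq_eq_sq_iff_eq_or_eq_neg.mp (hs.trans (by rw [← map_pow f, hx, map_intCast])) with h | h
  · rw [h, hfx]
  · rw [h, map_neg, hfx]

end IsCyclotomicExtension

section Kronecker

variable {n : ℕ} [NeZero n] {χ : MulChar (ZMod n) ℤ} {P M : ℕ} [NeZero M] {K : Type*} [Field K]
  [Algebra ℚ K] [IsCyclotomicExtension {M} ℚ K]

theorem exists_gaussSum_sqrt (hχ : χ.IsQuadratic)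
    (hsq : ∀ {ζ : K} (hζ : IsPrimitiveRoot ζ n),
      gaussSum (χ.ringHomComp (Int.castRingHom K)) (AddChar.zmodChar n hζ.pow_eq_one) ^ 2 =
        χ.ringHomComp (Int.castRingHom K) (-1) * n)
    (hP : Odd P) (hPsf : Squarefree P) (hnM : n ∣ M) (hPM : P ∣ M) :
    ∃ s : K, s ^ 2 = ((χ (-1) * n * (J(-1 | P) * P) : ℤ) : K) ∧
      ∀ (σ : K ≃ₐ[ℚ] K) (t : ℕ), t.Coprime M → (∀ ρ : K, ρ ^ M = 1 → σ ρ = ρ ^ t) →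
        σ s = ((χ t * J(t | P) : ℤ) : K) * s := by
  have : CharZero K := charZero_of_injective_algebraMap (algebraMap ℚ K).injective
  have hζ := IsCyclotomicExtension.zeta_spec M ℚ K
  set ζ := IsCyclotomicExtension.zeta M ℚ K
  have hζn : IsPrimitiveRoot (ζ ^ (M / n)) n := hζ.pow (NeZero.pos M) (Nat.div_mul_cancel hnM).symm
  refine ⟨gaussSum (χ.ringHomComp (Int.castRingHom K)) (AddChar.zmodChar n hζn.pow_eq_one) *
    ∏ q ∈ P.primeFactors, quadGaussSum q (ζ ^ (M / q)), ?_, fun σ t ht hσ => ?_⟩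
  · rw [mul_pow, hsq hζn, prod_quadGaussSum_sq hP hPsf hPM hζ, MulChar.ringHomComp_apply,
      eq_intCast]
    push_cast
    ring
  · rw [map_mul, map_gaussSum_zmodChar hχ hζn.pow_eq_one σ (ht.coprime_dvd_right hnM)
      (hσ _ (by rw [← pow_mul, mul_comm, pow_mul, hζ.pow_eq_one, one_pow])),
      map_prod_quadGaussSum hPsf hPM hζ.pow_eq_one σ ht (hσ ζ hζ.pow_eq_one)]
    push_cast
    ring

theorem kronecker_eq_one_of_sq_eq {N : ℕ} [NeZero N] {L : Type*} [Field L] [Algebra ℚ L]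
    [IsCyclotomicExtension {N} ℚ L] (hχ : χ.IsQuadratic)
    (hsq : ∀ {ζ : K} (hζ : IsPrimitiveRoot ζ n),
      gaussSum (χ.ringHomComp (Int.castRingHom K)) (AddChar.zmodChar n hζ.pow_eq_one) ^ 2 =
        χ.ringHomComp (Int.castRingHom K) (-1) * n)
    (hP : Odd P) (hPsf : Squarefree P) (hnM : n ∣ M) (hPM : P ∣ M) (hNM : N ∣ M)
    (h : ∃ x : L, x ^ 2 = ((χ (-1) * n * (J(-1 | P) * P) : ℤ) : L))
    {t : ℕ} (ht : t.Coprime M) (htN : t ≡ 1 [MOD N]) : χ t * J(t | P) = 1 := by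
  have : CharZero K := charZero_of_injective_algebraMap (algebraMap ℚ K).injective
  obtain ⟨s, hs, hmap⟩ := exists_gaussSum_sqrt hχ hsq hP hPsf hnM hPM
  obtain ⟨σ, hσ⟩ := IsCyclotomicExtension.exists_algEquiv_pow (K := K) ht
  have hσN : ∀ ρ : K, ρ ^ N = 1 → σ ρ = ρ := fun ρ hρ => by
    rw [hσ ρ (orderOf_dvd_iff_pow_eq_one.mp ((orderOf_dvd_of_pow_eq_one hρ).trans hNM)),
      pow_eq_pow_mod t hρ, htN, ← pow_eq_pow_mod 1 hρ, pow_one]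
  have hfix : σ s = s := IsCyclotomicExtension.algEquiv_apply_eq_self_of_sq_eq hNM h hs hσN
  have hs0 : s ≠ 0 := by
    have hΔ : χ (-1) * n * (J(-1 | P) * P) ≠ 0 :=
      mul_ne_zero (mul_ne_zero (isUnit_one.neg.map χ).ne_zero (by exact_mod_cast NeZero.ne n))
        (mul_ne_zero (jacobiSym.ne_zero (by simp)) (by exact_mod_cast hP.pos.ne'))
    rintro rfl
    rw [zero_pow two_ne_zero, eq_comm, Int.cast_eq_zero] at hs
    exact hΔ hs
  exact_mod_cast (mul_eq_right₀ hs0).mp ((hmap σ t ht hσ).symm.trans hfix)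

end Kronecker

section Primitivity

variable {a : ℕ} {χ : MulChar (ZMod (2 ^ a)) ℤ} {P M N : ℕ} [NeZero M]

theorem dvd_of_mem_primeFactors_of_kronecker_eq_one (hP : Odd P) (hPsf : Squarefree P)
    (hPM : P ∣ M) (hnM : 2 ^ a ∣ M) (hNM : N ∣ M)
    (hκ : ∀ t : ℕ, t.Coprime M → t ≡ 1 [MOD N] → χ t * J(t | P) = 1) {q : ℕ}
    (hq : q ∈ P.primeFactors) : q ∣ N := by
  have hqP := Nat.dvd_of_mem_primeFactors hq
  have hqprime := Nat.prime_of_mem_primeFactors hq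
  have : Fact q.Prime := ⟨hqprime⟩
  have hq2 : q ≠ 2 := by
    rintro rfl
    exact hP.not_two_dvd_nat hqP
  have hq2a : ¬q ∣ 2 ^ a := fun h =>
    hq2 ((Nat.prime_dvd_prime_iff_eq hqprime Nat.prime_two).mp (hqprime.dvd_of_dvd_pow h))
  have hqPq : ¬q ∣ P / q := fun h => hqprime.one_lt.ne' <| Nat.isUnit_iff.mp <|
    hPsf q (Nat.mul_div_cancel' hqP ▸ Nat.mul_dvd_mul_left q h)
  by_contra hqN
  obtain ⟨b, hb⟩ := jacobiSym.exists_eq_neg_one hq2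
  obtain ⟨t, htM, htN, htb, ht1⟩ := Nat.exists_coprime_modEq_of_not_dvd hqprime one_ne_zero
    (NeZero.ne M) hNM (by rwa [pow_one]) Nat.modEq_one
    (Nat.coprime_of_jacobiSym_ne_zero (by rw [hb]; decide))
  have hχt : χ t = 1 := by
    rw [(ZMod.natCast_eq_natCast_iff _ _ _).mpr
      (ht1.of_dvd (Nat.dvd_ordCompl_of_dvd_not_dvd hnM hq2a)), Nat.cast_one, map_one]
  have hJt : J(t | P) = -1 := by
    rw [← Nat.mul_div_cancel' hqP, jacobiSym.mul_right' _ hqprime.ne_zero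
      (Nat.div_ne_zero_iff_of_dvd hqP |>.mpr ⟨hP.pos.ne', hqprime.ne_zero⟩),
      jacobiSym.natCast_left_of_modEq (pow_one q ▸ htb), hb,
      jacobiSym.natCast_left_eq_one_of_modEq
        (ht1.of_dvd (Nat.dvd_ordCompl_of_dvd_not_dvd ((Nat.div_dvd_of_dvd hqP).trans hPM) hqPq)),
      mul_one]
  have := hκ t htM htN
  rw [hχt, hJt] at this
  norm_num at this

theorem two_pow_dvd_of_kronecker_eq_one
    (hχ : a ≠ 0 → ∃ f : ℕ, f ≡ 1 [MOD 2 ^ (a - 1)] ∧ χ f = -1) (hP : Odd P) (hPM : P ∣ M)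
    (hNM : N ∣ M) (hκ : ∀ t : ℕ, t.Coprime M → t ≡ 1 [MOD N] → χ t * J(t | P) = 1) :
    2 ^ a ∣ N := by
  rcases eq_or_ne a 0 with rfl | ha
  · exact pow_zero 2 ▸ one_dvd N
  by_contra h2N
  obtain ⟨f, hf1, hf⟩ := hχ ha
  have hfunit : IsUnit (f : ZMod (2 ^ a)) := by
    by_contra hu
    rw [χ.map_nonunit hu] at hf
    norm_num at hf
  obtain ⟨t, htM, htN, htf, ht1⟩ := Nat.exists_coprime_modEq_of_not_dvd Nat.prime_two ha
    (NeZero.ne M) hNM h2N hf1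
    (((ZMod.isUnit_iff_coprime f _).mp hfunit).coprime_dvd_right (dvd_pow_self 2 ha))
  have := hκ t htM htN
  rw [(ZMod.natCast_eq_natCast_iff _ _ _).mpr htf, hf, jacobiSym.natCast_left_eq_one_of_modEq
    (ht1.of_dvd (Nat.dvd_ordCompl_of_dvd_not_dvd hPM hP.not_two_dvd_nat))] at this
  norm_num at this

end Primitivity

-- The `2`-part of the Kronecker character of a fundamental discriminant.
structure IsKroneckerTwoPart {a : ℕ} (χ : MulChar (ZMod (2 ^ a)) ℤ) : Prop where
  isQuadratic : χ.IsQuadratic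
  gaussSum_sq : ∀ {K : Type} [Field K] {ζ : K} (hζ : IsPrimitiveRoot ζ (2 ^ a)),
    gaussSum (χ.ringHomComp (Int.castRingHom K)) (AddChar.zmodChar (2 ^ a) hζ.pow_eq_one) ^ 2 =
      χ.ringHomComp (Int.castRingHom K) (-1) * (2 ^ a : ℕ)
  not_factorsThrough : a ≠ 0 → ∃ f : ℕ, f ≡ 1 [MOD 2 ^ (a - 1)] ∧ χ f = -1

namespace IsKroneckerTwoPart

theorem one : IsKroneckerTwoPart (1 : MulChar (ZMod (2 ^ 0)) ℤ) where
  isQuadratic x := by simp [show x = 1 from Subsingleton.elim (α := ZMod 1) x 1]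
  gaussSum_sq _ := by
    rw [gaussSum_zmod_one, show (-1 : ZMod (2 ^ 0)) = 1 from rfl, map_one]
    simp
  not_factorsThrough h := absurd rfl h

open ZMod in
theorem χ₄ : IsKroneckerTwoPart (a := 2) χ₄ where
  isQuadratic := isQuadratic_χ₄
  gaussSum_sq := gaussSum_χ₄_sq
  not_factorsThrough _ := ⟨3, rfl, rfl⟩

open ZMod in
theorem χ₈ : IsKroneckerTwoPart (a := 3) χ₈ where
  isQuadratic := isQuadratic_χ₈
  gaussSum_sq := gaussSum_χ₈_sq
  not_factorsThrough _ := ⟨5, rfl, rfl⟩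

open ZMod in
theorem χ₈' : IsKroneckerTwoPart (a := 3) χ₈' where
  isQuadratic := isQuadratic_χ₈'
  gaussSum_sq := gaussSum_χ₈'_sq
  not_factorsThrough _ := ⟨5, rfl, rfl⟩

theorem two_pow_mul_dvd_of_sq_eq {a : ℕ} {χ : MulChar (ZMod (2 ^ a)) ℤ}
    (hχ : IsKroneckerTwoPart χ) {P : ℕ} (hP : Odd P) (hPsf : Squarefree P) {N : ℕ} [NeZero N]
    (h : ∃ x : CyclotomicField N ℚ,
      x ^ 2 = ((χ (-1) * (2 ^ a : ℕ) * (J(-1 | P) * P) : ℤ) : CyclotomicField N ℚ)) :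
    2 ^ a * P ∣ N := by
  have : NeZero (2 ^ a * P * N) := ⟨by simp [hP.pos.ne', NeZero.ne N]⟩
  have hPM : P ∣ 2 ^ a * P * N := ⟨2 ^ a * N, by ring⟩
  have hnM : 2 ^ a ∣ 2 ^ a * P * N := ⟨P * N, by ring⟩
  have hNM : N ∣ 2 ^ a * P * N := dvd_mul_left N _
  have hκ (t : ℕ) (ht : t.Coprime (2 ^ a * P * N)) (htN : t ≡ 1 [MOD N]) : χ t * J(t | P) = 1 :=
    kronecker_eq_one_of_sq_eq (K := CyclotomicField (2 ^ a * P * N) ℚ) hχ.isQuadratic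
      hχ.gaussSum_sq hP hPsf hnM hPM hNM h ht htN
  have h2N : 2 ^ a ∣ N := two_pow_dvd_of_kronecker_eq_one hχ.not_factorsThrough hP hPM hNM hκ
  have hPN : P ∣ N := Nat.prod_primeFactors_of_squarefree hPsf ▸ prod_primes_dvd N
    (fun q hq => (Nat.prime_of_mem_primeFactors hq).prime)
    fun q hq => dvd_of_mem_primeFactors_of_kronecker_eq_one hP hPsf hPM hnM hNM hκ hq
  exact ((Nat.coprime_two_left.mpr hP).pow_left a).mul_dvd_of_dvd_of_dvd h2N hPN

end IsKroneckerTwoPart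

theorem IsFundamentalDiscriminant.exists_kroneckerTwoPart {Δ : ℤ}
    (hΔ : IsFundamentalDiscriminant Δ) :
    ∃ (a : ℕ) (χ : MulChar (ZMod (2 ^ a)) ℤ) (P : ℕ), IsKroneckerTwoPart χ ∧ Odd P ∧
      Squarefree P ∧ Δ = χ (-1) * (2 ^ a : ℕ) * (J(-1 | P) * P) ∧ Δ.natAbs = 2 ^ a * P := by
  obtain ⟨P, hP, hPsf, ⟨hΔ, habs⟩ | ⟨hΔ, habs⟩ | ⟨hΔ, habs⟩ | ⟨hΔ, habs⟩⟩ :=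
    hΔ.exists_eq_mul_jacobiSym
  · exact ⟨0, 1, P, .one, hP, hPsf,
      by rw [hΔ, show (-1 : ZMod (2 ^ 0)) = 1 from rfl, map_one]; simp, by simpa using habs⟩
  · exact ⟨2, ZMod.χ₄, P, .χ₄, hP, hPsf, by rw [hΔ]; rfl, habs⟩
  · exact ⟨3, ZMod.χ₈, P, .χ₈, hP, hPsf, by rw [hΔ]; rfl, habs⟩
  · exact ⟨3, ZMod.χ₈', P, .χ₈', hP, hPsf, by rw [hΔ]; rfl, habs⟩

/-- Let `Δ` be a fundamental discriminant and `N ≥ 1` an integer. If `ℚ(√Δ)` is contained in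
the cyclotomic field `ℚ(ζ_N)` (i.e. some element of `ℚ(ζ_N)` has square `Δ`), then `|Δ|`
divides `N`; in particular `|Δ|` is the conductor of the quadratic field `ℚ(√Δ)`. -/
theorem natAbs_dvd_of_quadratic_subfield_of_cyclotomic
    (Δ : ℤ) (hΔ : IsFundamentalDiscriminant Δ) (N : ℕ+)
    (h : ∃ x : CyclotomicField N ℚ, x ^ 2 = (Δ : CyclotomicField N ℚ)) :
    Δ.natAbs ∣ (N : ℕ) := by
  obtain ⟨a, χ, P, hχ, hP, hPsf, rfl, habs⟩ := hΔ.exists_kroneckerTwoPart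
  rw [habs]
  exact hχ.two_pow_mul_dvd_of_sq_eq hP hPsf h
end
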